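/- arXiv:1904.11771 — 2 statements merged into one kernel-verified Lean document; each statement's English description precedes it below -/
import Mathlib

section
/- With the relator Γ on monotone functionals (t Γ(R) r iff ∀ h, t(h) ≤ r(R ⇒ h)): for relations R ⊆ X × Y and S ⊆ Y × Z, if t Γ(R) r and r Γ(S) u with u : (Z → Q) → Q monotone, then t Γ(R∘S) u, where R∘S is relational composition. -/
/-! Pushing a valuation forward along `R` and then along `S` gives exactly its push-forward along
`R ∘ S`, since both are the supremum of `h a` over all paths `a R b S c`; so the two relator
inequalities chain. -/

theorem iSup_rel_iSup_rel_eq_iSup_relComp {Q : Type*} [CompleteLattice Q] {X Y Z : Type*}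
    (R : X → Y → Prop) (S : Y → Z → Prop) (h : X → Q) (c : Z) :
    ⨆ (b) (_ : S b c), ⨆ (a) (_ : R a b), h a = ⨆ (a) (_ : ∃ y, R a y ∧ S y c), h a := by
  simp only [iSup_exists, iSup_and]
  rw [iSup_comm]
  refine iSup_congr fun b => ?_
  rw [iSup_comm]
  exact iSup_congr fun a => iSup_comm

theorem relator_comp_general {Q : Type*} [CompleteLattice Q] {X Y Z : Type*}
    (R : X → Y → Prop) (S : Y → Z → Prop)
    (t : (X → Q) → Q) (r : (Y → Q) → Q) (u : (Z → Q) → Q)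
    (htr : ∀ h : X → Q, t h ≤ r (fun b => ⨆ (a) (_ : R a b), h a))
    (hru : ∀ h : Y → Q, r h ≤ u (fun c => ⨆ (b) (_ : S b c), h b)) :
    ∀ h : X → Q, t h ≤ u (fun c => ⨆ (a) (_ : ∃ y, R a y ∧ S y c), h a) := by
  intro h
  calc t h ≤ r (fun b => ⨆ (a) (_ : R a b), h a) := htr h
    _ ≤ u (fun c => ⨆ (b) (_ : S b c), ⨆ (a) (_ : R a b), h a) := hru _
    _ = u (fun c => ⨆ (a) (_ : ∃ y, R a y ∧ S y c), h a) := by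
      simp only [iSup_rel_iSup_rel_eq_iSup_relComp]

theorem relator_comp {Q : Type*} [CompleteLattice Q] {X Y Z : Type*}
    (R : X → Y → Prop) (S : Y → Z → Prop)
    (t : (X → Q) → Q) (r : (Y → Q) → Q) (u : (Z → Q) → Q) (hu : Monotone u)
    (htr : ∀ h : X → Q, t h ≤ r (fun b => ⨆ (a) (_ : R a b), h a))
    (hru : ∀ h : Y → Q, r h ≤ u (fun c => ⨆ (b) (_ : S b c), h b)) :
    ∀ h : X → Q, t h ≤ u (fun c => ⨆ (a) (_ : ∃ y, R a y ∧ S y c), h a) :=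
  relator_comp_general R S t r u htr hru
end

section
/- Let Q be a complete lattice, T a countable set of terms, Φ a set of formulas, and sat : T → Φ → Q. Suppose Φ is closed under countable conjunctions (there is an operation conj on countable families of formulas with sat(t, conj X) = inf { sat(t, φ) | φ ∈ X }) and under thresholds (for each φ and a ∈ Q there is step(φ, a) with sat(t, step(φ, a)) = ⊤ if a ≤ sat(t, φ), and ⊥ otherwise). Define t ⊑ r iff ∀ φ, sat(t, φ) ≤ sat(r, φ). Then for every term t there exists a formula χ_t such that for all r: sat(r, χ_t) = ⊤ if t ⊑ r, and sat(r, χ_t) = ⊥ otherwise (assuming ⊤ ≠ ⊥). -/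
/-!
For every `r` with `t ⋢ r` pick a formula `φ r` on which `r` falls below `t`. The conjunction,
over the countably many `r`, of the thresholds `step (φ r) (sat t (φ r))` is `⊤` at `r` exactly
when `r` reaches `t` on every chosen formula, i.e. exactly when `t ⊑ r`.
-/

theorem iInf_ite_top_bot {Q ι : Type*} [CompleteLattice Q] (p : ι → Prop) [DecidablePred p]
    [Decidable (∀ i, p i)] : (⨅ i, if p i then (⊤ : Q) else ⊥) = if ∀ i, p i then ⊤ else ⊥ := by
  split_ifs with h
  · exact iInf_eq_top.2 fun i => if_pos (h i)
  · obtain ⟨i, hi⟩ := not_forall.1 h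
    exact le_bot_iff.1 ((iInf_le _ i).trans_eq (if_neg hi))

theorem exists_forall_iff_apply {T Φ : Type*} [Nonempty Φ] (P : T → Φ → Prop) :
    ∃ w : T → Φ, ∀ r, (∀ φ, P r φ) ↔ P r (w r) := by
  have (r : T) : ∃ ψ, (∀ φ, P r φ) ↔ P r ψ := by
    by_cases h : ∀ φ, P r φ
    · exact ⟨Classical.arbitrary Φ, iff_of_true h (h _)⟩
    · obtain ⟨ψ, hψ⟩ := not_forall.1 h
      exact ⟨ψ, iff_of_false h hψ⟩
  exact Classical.axiomOfChoice this

section ThresholdConjunction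

variable {Q T Φ : Type*} [CompleteLattice Q] (sat : T → Φ → Q) {conj : Set Φ → Φ}
  {step : Φ → Q → Φ}

open scoped Classical in
theorem sat_conj_range_step {ι : Type*} [Countable ι]
    (hconj : ∀ s : Set Φ, s.Countable → ∀ t, sat t (conj s) = ⨅ φ ∈ s, sat t φ)
    (hstep : ∀ φ a t, sat t (step φ a) = if a ≤ sat t φ then (⊤ : Q) else ⊥)
    (φ : ι → Φ) (a : ι → Q) (r : T) :
    sat r (conj (Set.range fun i => step (φ i) (a i))) =
      if ∀ i, a i ≤ sat r (φ i) then ⊤ else ⊥ := by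
  rw [hconj _ (Set.countable_range _), iInf_range]
  simp only [hstep]
  exact iInf_ite_top_bot _

end ThresholdConjunction

open scoped Classical in
theorem characteristic_formula_general {Q : Type*} [CompleteLattice Q]
    {T Φ : Type*} [Countable T] (sat : T → Φ → Q)
    (conj : Set Φ → Φ)
    (hconj : ∀ s : Set Φ, s.Countable → ∀ t, sat t (conj s) = ⨅ φ ∈ s, sat t φ)
    (step : Φ → Q → Φ)
    (hstep : ∀ φ a t, sat t (step φ a) = if a ≤ sat t φ then (⊤ : Q) else ⊥) :
    ∀ t : T, ∃ χ : Φ, ∀ r : T,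
      sat r χ = if (∀ φ, sat t φ ≤ sat r φ) then (⊤ : Q) else ⊥ := by
  intro t
  have : Nonempty Φ := ⟨conj ∅⟩
  obtain ⟨w, hw⟩ := exists_forall_iff_apply fun r φ => sat t φ ≤ sat r φ
  refine ⟨conj (Set.range fun r => step (w r) (sat t (w r))), fun r => ?_⟩
  rw [sat_conj_range_step sat hconj hstep]
  congr 1
  exact propext ⟨fun h => (hw r).2 (h r), fun h _ => h _⟩

open scoped Classical in
theorem characteristic_formula {Q : Type*} [CompleteLattice Q]
    (hne : (⊤ : Q) ≠ ⊥)
    {T Φ : Type*} [Countable T] (sat : T → Φ → Q)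
    (conj : Set Φ → Φ)
    (hconj : ∀ s : Set Φ, s.Countable → ∀ t, sat t (conj s) = ⨅ φ ∈ s, sat t φ)
    (step : Φ → Q → Φ)
    (hstep : ∀ φ a t, sat t (step φ a) = if a ≤ sat t φ then (⊤ : Q) else ⊥) :
    ∀ t : T, ∃ χ : Φ, ∀ r : T,
      sat r χ = if (∀ φ, sat t φ ≤ sat r φ) then (⊤ : Q) else ⊥ :=
  characteristic_formula_general sat conj hconj step hstep
end
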